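/- arXiv:2505.22211 — 4 statements merged into one kernel-verified Lean document; each statement's English description precedes it below -/
import Mathlib

section
/- Let μ, μ' ∈ (0,1) and φ > 0 be fixed, and let ε ∈ (0, 1/2). There exists a constant C > 0 (depending on φ and ε) such that for all μ, μ' ∈ [ε, 1−ε], the Kullback–Leibler divergence satisfies KL(Beta(μφ, (1−μ)φ), Beta(μ'φ, (1−μ')φ)) ≤ C (μ − μ')². -/
/-!
For fixed `φ`, the laws `Beta(tφ, (1 - t)φ)` form an exponential family in `t` with sufficient
statistic `φ · log (x / (1 - x))` and log-partition function `L t = log B(tφ, (1 - t)φ)`, so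
`KL(μ, μ') = L μ' - L μ - L'(μ) (μ' - μ)` is the Bregman divergence of `L`. Instead of
differentiating under the integral sign, `L'(μ) = φ · E_μ[log (x / (1 - x))]` follows from Gibbs'
inequality: `KL(μ, ·) ≥ 0` says that this expectation is a supporting slope of the differentiable
(indeed analytic) function `L` at `μ`. Adding `KL(μ', μ) ≥ 0` gives
`KL(μ, μ') ≤ (μ - μ') (L'(μ) - L'(μ'))`, and `L'` is Lipschitz on the compact interval `[ε, 1 - ε]`.
-/

open Real MeasureTheory

/-- Density of the Beta(a,b) distribution on (0,1). -/
noncomputable def betaPdf (a b x : ℝ) : ℝ :=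
  (Real.Gamma (a + b) / (Real.Gamma a * Real.Gamma b)) * x ^ (a - 1) * (1 - x) ^ (b - 1)

/-- KL divergence between Beta distributions in the mean-precision parametrization,
`KL(Beta(μφ,(1-μ)φ), Beta(μ'φ,(1-μ')φ))`, written via densities. -/
noncomputable def klBeta (φ μ μ' : ℝ) : ℝ :=
  ∫ x in Set.Ioo (0:ℝ) 1,
    betaPdf (μ * φ) ((1 - μ) * φ) x *
      Real.log (betaPdf (μ * φ) ((1 - μ) * φ) x / betaPdf (μ' * φ) ((1 - μ') * φ) x)

open Set Topology ProbabilityTheory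
open scoped NNReal

lemma sub_le_mul_log_div {p q : ℝ} (hp : 0 ≤ p) (hq : 0 < q) : p - q ≤ p * log (p / q) := by
  rcases hp.eq_or_lt with rfl | hp
  · simpa using hq.le
  have := one_sub_inv_le_log_of_pos (div_pos hp hq)
  rw [inv_div] at this
  calc p - q = p * (1 - q / p) := by field_simp
    _ ≤ p * log (p / q) := by gcongr

lemma integral_mul_log_div_nonneg {α : Type*} [MeasurableSpace α] {μ : Measure α} {p q : α → ℝ}
    (hp : Integrable p μ) (hq : Integrable q μ) (hp0 : ∀ᵐ x ∂μ, 0 ≤ p x)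
    (hq0 : ∀ᵐ x ∂μ, 0 < q x) (hpq : ∫ x, q x ∂μ ≤ ∫ x, p x ∂μ) :
    0 ≤ ∫ x, p x * log (p x / q x) ∂μ := by
  -- Pointwise `p - q ≤ p log (p / q)`; a non-integrable integrand has integral `0` anyway.
  by_cases hint : Integrable (fun x => p x * log (p x / q x)) μ
  · calc 0 ≤ ∫ x, p x - q x ∂μ := by rw [integral_sub hp hq]; linarith
      _ ≤ _ := integral_mono_ae (hp.sub hq) hint <| by
        filter_upwards [hp0, hq0] with x hpx hqx using sub_le_mul_log_div hpx hqx
  · rw [integral_undef hint]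

lemma eq_of_hasDerivAt_of_forall_add_mul_sub_le {g : ℝ → ℝ} {s : Set ℝ} {x c d : ℝ}
    (hs : s ∈ 𝓝 x) (hd : HasDerivAt g d x) (hc : ∀ y ∈ s, g x + c * (y - x) ≤ g y) : c = d := by
  have hmin : IsLocalMin (fun y => g y - c * (y - x)) x :=
    Filter.mem_of_superset hs fun y hy => by simpa using sub_le_sub_right (hc y hy) (c * (y - x))
  have := hmin.hasDerivAt_eq_zero ((hd.sub ((hasDerivAt_id x).sub_const x |>.const_mul c)))
  linarith

lemma LipschitzOnWith.mul_sub_le {f : ℝ → ℝ} {K : ℝ≥0} {s : Set ℝ} (hf : LipschitzOnWith K f s)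
    {x y : ℝ} (hx : x ∈ s) (hy : y ∈ s) : (x - y) * (f x - f y) ≤ K * (x - y) ^ 2 := by
  have h := hf.dist_le_mul x hx y hy
  rw [Real.dist_eq, Real.dist_eq] at h
  calc (x - y) * (f x - f y) ≤ |x - y| * |f x - f y| := by rw [← abs_mul]; exact le_abs_self _
    _ ≤ |x - y| * (K * |x - y|) := by gcongr
    _ = K * (x - y) ^ 2 := by rw [← sq_abs (x - y)]; ring

lemma Real.analyticAt_Gamma {x : ℝ} (hx : 0 < x) : AnalyticAt ℝ Gamma x := by
  have hC : AnalyticAt ℂ Complex.Gamma x := by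
    refine Complex.analyticAt_iff_eventually_differentiableAt.2 ?_
    filter_upwards [(isOpen_lt continuous_const Complex.continuous_re).mem_nhds
      (show (0:ℝ) < (x : ℂ).re by simpa using hx)] with s hs
    refine Complex.differentiableAt_Gamma s fun m hm => ?_
    simp only [hm, Complex.neg_re, Complex.natCast_re] at hs
    linarith [(Nat.cast_nonneg m : (0:ℝ) ≤ m)]
  exact (Complex.reCLM.analyticAt _).comp (hC.restrictScalars.comp (Complex.ofRealCLM.analyticAt x))

noncomputable def betaKernel (a b x : ℝ) : ℝ := x ^ (a - 1) * (1 - x) ^ (b - 1)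

lemma betaPdf_eq_inv_beta_mul (a b x : ℝ) : betaPdf a b x = (beta a b)⁻¹ * betaKernel a b x := by
  rw [betaPdf, betaKernel, beta, inv_div]; ring

lemma betaKernel_pos {a b x : ℝ} (hx : x ∈ Ioo (0:ℝ) 1) : 0 < betaKernel a b x :=
  mul_pos (rpow_pos_of_pos hx.1 _) (rpow_pos_of_pos (sub_pos.2 hx.2) _)

lemma betaPdf_pos {a b x : ℝ} (ha : 0 < a) (hb : 0 < b) (hx : x ∈ Ioo (0:ℝ) 1) :
    0 < betaPdf a b x := by
  rw [betaPdf_eq_inv_beta_mul]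
  exact mul_pos (inv_pos.2 (beta_pos ha hb)) (betaKernel_pos hx)

lemma measurable_betaPdf (a b : ℝ) : Measurable (betaPdf a b) := by
  unfold betaPdf; fun_prop

lemma lintegral_ofReal_betaPdf {a b : ℝ} (ha : 0 < a) (hb : 0 < b) :
    ∫⁻ x in Ioo 0 1, ENNReal.ofReal (betaPdf a b x) = 1 := by
  rw [← lintegral_betaPDF_eq_one ha hb, lintegral_betaPDF]
  congr! 3 with x
  rw [betaPdf_eq_inv_beta_mul, betaKernel]; ring

lemma integrableOn_betaPdf {a b : ℝ} (ha : 0 < a) (hb : 0 < b) :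
    IntegrableOn (betaPdf a b) (Ioo 0 1) := by
  refine (lintegral_ofReal_ne_top_iff_integrable ?_ ?_).1 ?_
  · exact (measurable_betaPdf a b).aestronglyMeasurable
  · exact ae_restrict_of_forall_mem measurableSet_Ioo fun x hx => (betaPdf_pos ha hb hx).le
  · simp [lintegral_ofReal_betaPdf ha hb]

lemma setIntegral_betaPdf {a b : ℝ} (ha : 0 < a) (hb : 0 < b) :
    ∫ x in Ioo 0 1, betaPdf a b x = 1 := by
  rw [integral_eq_lintegral_of_nonneg_ae, lintegral_ofReal_betaPdf ha hb, ENNReal.toReal_one]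
  · exact ae_restrict_of_forall_mem measurableSet_Ioo fun x hx => (betaPdf_pos ha hb hx).le
  · exact (measurable_betaPdf a b).aestronglyMeasurable

lemma integrableOn_betaKernel {a b : ℝ} (ha : 0 < a) (hb : 0 < b) :
    IntegrableOn (betaKernel a b) (Ioo 0 1) := by
  refine IntegrableOn.congr_fun ((integrableOn_betaPdf ha hb).const_mul (beta a b))
    (fun x _ => ?_) measurableSet_Ioo
  rw [betaPdf_eq_inv_beta_mul, ← mul_assoc, mul_inv_cancel₀ (beta_pos ha hb).ne', one_mul]

lemma integrableOn_betaKernel_mul_log {a b : ℝ} (ha : 0 < a) (hb : 0 < b) :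
    IntegrableOn (fun x => betaKernel a b x * log x) (Ioo 0 1) := by
  refine ((integrableOn_betaKernel (half_pos ha) hb).const_mul (2 / a)).mono' ?_ ?_
  · exact Measurable.aestronglyMeasurable (by unfold betaKernel; fun_prop)
  · -- `|x ^ (a / 2) * log x| ≤ 2 / a` trades the logarithm for half of the exponent `a - 1`.
    refine ae_restrict_of_forall_mem measurableSet_Ioo fun x hx => ?_
    have hlog := abs_log_mul_self_rpow_lt x (a / 2) hx.1 hx.2.le (half_pos ha)
    have : betaKernel a b x * log x = betaKernel (a / 2) b x * (log x * x ^ (a / 2)) := by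
      rw [betaKernel, betaKernel, show a - 1 = (a / 2 - 1) + a / 2 by ring, rpow_add hx.1]; ring_nf
    rw [this, norm_mul, norm_of_nonneg (betaKernel_pos hx).le, Real.norm_eq_abs, mul_comm (2 / a)]
    gcongr
    · exact (betaKernel_pos hx).le
    · simpa [one_div_div] using hlog.le

lemma betaKernel_one_sub (a b x : ℝ) : betaKernel a b (1 - x) = betaKernel b a x := by
  rw [betaKernel, betaKernel, sub_sub_cancel, mul_comm]

lemma integrableOn_betaKernel_mul_log_one_sub {a b : ℝ} (ha : 0 < a) (hb : 0 < b) :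
    IntegrableOn (fun x => betaKernel a b x * log (1 - x)) (Ioo 0 1) := by
  have h := ((intervalIntegrable_iff_integrableOn_Ioo_of_le zero_le_one).2
    (integrableOn_betaKernel_mul_log hb ha)).comp_sub_left 1
  rw [sub_zero, sub_self] at h
  rw [← intervalIntegrable_iff_integrableOn_Ioo_of_le zero_le_one]
  simpa only [betaKernel_one_sub, sub_sub_cancel] using h.symm

lemma integrableOn_betaPdf_mul_logit {a b : ℝ} (ha : 0 < a) (hb : 0 < b) :
    IntegrableOn (fun x => betaPdf a b x * (log x - log (1 - x))) (Ioo 0 1) := by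
  refine IntegrableOn.congr_fun (((integrableOn_betaKernel_mul_log ha hb).sub
    (integrableOn_betaKernel_mul_log_one_sub ha hb)).const_mul (beta a b)⁻¹)
    (fun x _ => ?_) measurableSet_Ioo
  simp only [betaPdf_eq_inv_beta_mul, Pi.sub_apply]; ring

noncomputable def betaLogPartition (φ t : ℝ) : ℝ := log (beta (t * φ) ((1 - t) * φ))

lemma analyticOnNhd_betaLogPartition {φ : ℝ} (hφ : 0 < φ) :
    AnalyticOnNhd ℝ (betaLogPartition φ) (Ioo 0 1) := by
  intro t ht
  have ha : 0 < t * φ := mul_pos ht.1 hφ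
  have hb : 0 < (1 - t) * φ := mul_pos (sub_pos.2 ht.2) hφ
  have hΓ {f : ℝ → ℝ} (hf : AnalyticAt ℝ f t) (hpos : 0 < f t) :
      AnalyticAt ℝ (fun s => Gamma (f s)) t := (Real.analyticAt_Gamma hpos).comp hf
  refine AnalyticAt.log ?_ (beta_pos ha hb)
  refine AnalyticAt.div ((hΓ (f := fun s => s * φ) (by fun_prop) ha).mul
    (hΓ (f := fun s => (1 - s) * φ) (by fun_prop) hb))
    (hΓ (f := fun s => s * φ + (1 - s) * φ) (by fun_prop) (add_pos ha hb))
    (Gamma_pos_of_pos (add_pos ha hb)).ne'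

noncomputable def meanLogit (a b : ℝ) : ℝ := ∫ x in Ioo 0 1, betaPdf a b x * (log x - log (1 - x))

lemma log_betaPdf {a b x : ℝ} (ha : 0 < a) (hb : 0 < b) (hx : x ∈ Ioo (0:ℝ) 1) :
    log (betaPdf a b x) = -log (beta a b) + (a - 1) * log x + (b - 1) * log (1 - x) := by
  rw [betaPdf_eq_inv_beta_mul, log_mul (inv_pos.2 (beta_pos ha hb)).ne'
    (betaKernel_pos hx).ne', log_inv, betaKernel, log_mul (rpow_pos_of_pos hx.1 _).ne'
    (rpow_pos_of_pos (sub_pos.2 hx.2) _).ne', log_rpow hx.1, log_rpow (sub_pos.2 hx.2)]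
  ring

lemma shape_pos_of_mem_Ioo {φ μ : ℝ} (hφ : 0 < φ) (hμ : μ ∈ Ioo (0:ℝ) 1) :
    0 < μ * φ ∧ 0 < (1 - μ) * φ :=
  ⟨mul_pos hμ.1 hφ, mul_pos (sub_pos.2 hμ.2) hφ⟩

lemma klBeta_eq {φ μ μ' : ℝ} (hφ : 0 < φ) (hμ : μ ∈ Ioo (0:ℝ) 1) (hμ' : μ' ∈ Ioo (0:ℝ) 1) :
    klBeta φ μ μ' = betaLogPartition φ μ' - betaLogPartition φ μ
      + (μ - μ') * (φ * meanLogit (μ * φ) ((1 - μ) * φ)) := by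
  obtain ⟨ha, hb⟩ := shape_pos_of_mem_Ioo hφ hμ
  obtain ⟨ha', hb'⟩ := shape_pos_of_mem_Ioo hφ hμ'
  have hpoint : ∀ x ∈ Ioo (0:ℝ) 1,
      betaPdf (μ * φ) ((1 - μ) * φ) x *
        log (betaPdf (μ * φ) ((1 - μ) * φ) x / betaPdf (μ' * φ) ((1 - μ') * φ) x)
      = (betaLogPartition φ μ' - betaLogPartition φ μ) * betaPdf (μ * φ) ((1 - μ) * φ) x
        + (μ - μ') * φ * (betaPdf (μ * φ) ((1 - μ) * φ) x * (log x - log (1 - x))) := by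
    intro x hx
    rw [log_div (betaPdf_pos ha hb hx).ne' (betaPdf_pos ha' hb' hx).ne', log_betaPdf ha hb hx,
      log_betaPdf ha' hb' hx, betaLogPartition, betaLogPartition]
    ring
  rw [klBeta, setIntegral_congr_fun measurableSet_Ioo hpoint,
    integral_add ((integrableOn_betaPdf ha hb).const_mul _)
      ((integrableOn_betaPdf_mul_logit ha hb).const_mul _),
    integral_const_mul, integral_const_mul, setIntegral_betaPdf ha hb, meanLogit]
  ring

lemma klBeta_nonneg {φ μ μ' : ℝ} (hφ : 0 < φ) (hμ : μ ∈ Ioo (0:ℝ) 1) (hμ' : μ' ∈ Ioo (0:ℝ) 1) :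
    0 ≤ klBeta φ μ μ' := by
  obtain ⟨ha, hb⟩ := shape_pos_of_mem_Ioo hφ hμ
  obtain ⟨ha', hb'⟩ := shape_pos_of_mem_Ioo hφ hμ'
  refine integral_mul_log_div_nonneg (integrableOn_betaPdf ha hb) (integrableOn_betaPdf ha' hb')
    (ae_restrict_of_forall_mem measurableSet_Ioo fun x hx => (betaPdf_pos ha hb hx).le)
    (ae_restrict_of_forall_mem measurableSet_Ioo fun x hx => betaPdf_pos ha' hb' hx) ?_
  rw [setIntegral_betaPdf ha hb, setIntegral_betaPdf ha' hb']

lemma meanLogit_eq_deriv_betaLogPartition {φ μ : ℝ} (hφ : 0 < φ) (hμ : μ ∈ Ioo (0:ℝ) 1) :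
    φ * meanLogit (μ * φ) ((1 - μ) * φ) = deriv (betaLogPartition φ) μ := by
  refine eq_of_hasDerivAt_of_forall_add_mul_sub_le (isOpen_Ioo.mem_nhds hμ)
    ((analyticOnNhd_betaLogPartition hφ μ hμ).differentiableAt.hasDerivAt) fun ν hν => ?_
  have := klBeta_nonneg hφ hμ hν
  rw [klBeta_eq hφ hμ hν] at this
  linarith

lemma klBeta_le_mul_sub_deriv {φ μ μ' : ℝ} (hφ : 0 < φ) (hμ : μ ∈ Ioo (0:ℝ) 1)
    (hμ' : μ' ∈ Ioo (0:ℝ) 1) :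
    klBeta φ μ μ' ≤ (μ - μ') * (deriv (betaLogPartition φ) μ - deriv (betaLogPartition φ) μ') := by
  have hsymm := klBeta_nonneg hφ hμ' hμ
  rw [klBeta_eq hφ hμ' hμ] at hsymm
  rw [klBeta_eq hφ hμ hμ', meanLogit_eq_deriv_betaLogPartition hφ hμ,
    ← meanLogit_eq_deriv_betaLogPartition hφ hμ']
  linarith

/-- For means bounded away from 0 and 1, the KL divergence between Beta distributions
with fixed precision `φ` is bounded by a constant times the squared distance of the means. -/
theorem klBeta_le_sq (φ ε : ℝ) (hφ : 0 < φ) (hε : ε ∈ Set.Ioo (0:ℝ) (1/2)) :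
    ∃ C > 0, ∀ μ μ' : ℝ, μ ∈ Set.Icc ε (1 - ε) → μ' ∈ Set.Icc ε (1 - ε) →
      klBeta φ μ μ' ≤ C * (μ - μ') ^ 2 := by
  have hsub : Icc ε (1 - ε) ⊆ Ioo 0 1 := Icc_subset_Ioo hε.1 (by linarith [hε.1])
  obtain ⟨K, hK⟩ := (((analyticOnNhd_betaLogPartition hφ).deriv.contDiffOn_of_completeSpace
    (n := 1)).mono hsub).exists_lipschitzOnWith one_ne_zero (convex_Icc _ _) isCompact_Icc
  refine ⟨K + 1, by positivity, fun μ μ' hμ hμ' => ?_⟩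
  calc klBeta φ μ μ'
      ≤ (μ - μ') * (deriv (betaLogPartition φ) μ - deriv (betaLogPartition φ) μ') :=
        klBeta_le_mul_sub_deriv hφ (hsub hμ) (hsub hμ')
    _ ≤ K * (μ - μ') ^ 2 := hK.mul_sub_le hμ hμ'
    _ ≤ (K + 1) * (μ - μ') ^ 2 := by gcongr; linarith
end

section
/- Let φ > 0 and ε ∈ (0, 1/2) be fixed, and let α ∈ (0,1). There exists a constant c > 0 such that for all μ, μ' ∈ [ε, 1−ε], the α-Rényi divergence satisfies D_α(Beta(μφ,(1−μ)φ), Beta(μ'φ,(1−μ')φ)) ≥ c (μ − μ')². -/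
open Real MeasureTheory

/-- α-Rényi divergence `D_α(Beta(μφ,(1-μ)φ), Beta(μ'φ,(1-μ')φ))` written via densities. -/
noncomputable def renyiBeta (α φ μ μ' : ℝ) : ℝ :=
  (1 / (α - 1)) * Real.log (∫ x in Set.Ioo (0:ℝ) 1,
    (betaPdf (μ * φ) ((1 - μ) * φ) x) ^ α * (betaPdf (μ' * φ) ((1 - μ') * φ) x) ^ (1 - α))

/-! The Rényi integrand of two Beta densities with common precision is an unnormalised Beta
density, so with `g m = log B(mφ, (1 - m)φ)` and `m = αμ + (1 - α)μ'`,
`D_α = (α g μ + (1 - α) g μ' - g m) / (1 - α)`, a Jensen gap of `g` divided by `1 - α`.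
Writing `Γ(x) = Γ(x + 1) / x` turns `g` into `-log m` plus convex functions (by the
log-convexity of `Γ` and the convexity of `-log`). As `-log` is `1`-strongly convex on `(0, 1)`,
the gap is at least `α (1 - α) (μ - μ')² / 2`, whence `c = α / 2`. -/

open Set ProbabilityTheory

theorem integral_Ioo_rpow_mul_one_sub_rpow {a b : ℝ} (ha : 0 < a) (hb : 0 < b) :
    ∫ x in Ioo (0:ℝ) 1, x ^ (a - 1) * (1 - x) ^ (b - 1) = beta a b := by
  have h : ((∫ x in Ioo (0:ℝ) 1, x ^ (a - 1) * (1 - x) ^ (b - 1) : ℝ) : ℂ)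
      = Complex.betaIntegral a b := by
    rw [← integral_complex_ofReal, Complex.betaIntegral,
      intervalIntegral.integral_of_le zero_le_one, integral_Ioc_eq_integral_Ioo]
    refine setIntegral_congr_fun measurableSet_Ioo fun x hx => ?_
    push_cast [Complex.ofReal_cpow hx.1.le, Complex.ofReal_cpow (sub_nonneg.2 hx.2.le)]
    rfl
  rw [beta_eq_betaIntegralReal a b ha hb, ← h, Complex.ofReal_re]

theorem betaPdf_eq_exp {a b x : ℝ} (ha : 0 < a) (hb : 0 < b) (hx : x ∈ Ioo (0:ℝ) 1) :
    betaPdf a b x = exp (-log (beta a b) + (a - 1) * log x + (b - 1) * log (1 - x)) := by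
  rw [exp_add, exp_add, exp_neg, exp_log (beta_pos ha hb), mul_comm (a - 1), mul_comm (b - 1),
    ← rpow_def_of_pos hx.1, ← rpow_def_of_pos (sub_pos.2 hx.2), betaPdf, beta, inv_div]

theorem betaPdf_rpow_mul_rpow {a b a' b' t x : ℝ} (ha : 0 < a) (hb : 0 < b) (ha' : 0 < a')
    (hb' : 0 < b') (hx : x ∈ Ioo (0:ℝ) 1) :
    betaPdf a b x ^ t * betaPdf a' b' x ^ (1 - t) =
      exp (-(t * log (beta a b) + (1 - t) * log (beta a' b'))) *
        (x ^ (t * a + (1 - t) * a' - 1) * (1 - x) ^ (t * b + (1 - t) * b' - 1)) := by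
  rw [betaPdf_eq_exp ha hb hx, betaPdf_eq_exp ha' hb' hx, ← exp_mul, ← exp_mul,
    rpow_def_of_pos hx.1, rpow_def_of_pos (sub_pos.2 hx.2), ← exp_add, ← exp_add, ← exp_add]
  ring_nf

theorem log_integral_betaPdf_rpow_mul_rpow {a b a' b' t : ℝ} (ha : 0 < a) (hb : 0 < b)
    (ha' : 0 < a') (hb' : 0 < b') (ht₀ : 0 ≤ t) (ht₁ : t ≤ 1) :
    log (∫ x in Ioo (0:ℝ) 1, betaPdf a b x ^ t * betaPdf a' b' x ^ (1 - t)) =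
      log (beta (t * a + (1 - t) * a') (t * b + (1 - t) * b'))
        - t * log (beta a b) - (1 - t) * log (beta a' b') := by
  have hA : 0 < t * a + (1 - t) * a' :=
    convex_Ioi (0:ℝ) ha ha' ht₀ (sub_nonneg.2 ht₁) (by ring)
  have hB : 0 < t * b + (1 - t) * b' :=
    convex_Ioi (0:ℝ) hb hb' ht₀ (sub_nonneg.2 ht₁) (by ring)
  rw [setIntegral_congr_fun measurableSet_Ioo fun x hx => betaPdf_rpow_mul_rpow ha hb ha' hb' hx,
    integral_const_mul, integral_Ioo_rpow_mul_one_sub_rpow hA hB,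
    log_mul (exp_pos _).ne' (beta_pos hA hB).ne', log_exp]
  ring

theorem renyiBeta_eq_log_beta {α φ μ μ' : ℝ} (hφ : 0 < φ) (hμ : μ ∈ Ioo (0:ℝ) 1)
    (hμ' : μ' ∈ Ioo (0:ℝ) 1) (hα₀ : 0 ≤ α) (hα₁ : α ≤ 1) :
    renyiBeta α φ μ μ' = 1 / (α - 1) *
      (log (beta ((α * μ + (1 - α) * μ') * φ) ((1 - (α * μ + (1 - α) * μ')) * φ))
        - α * log (beta (μ * φ) ((1 - μ) * φ))
        - (1 - α) * log (beta (μ' * φ) ((1 - μ') * φ))) := by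
  have pos {m : ℝ} (hm : m ∈ Ioo (0:ℝ) 1) : 0 < m * φ ∧ 0 < (1 - m) * φ :=
    ⟨mul_pos hm.1 hφ, mul_pos (sub_pos.2 hm.2) hφ⟩
  rw [renyiBeta, log_integral_betaPdf_rpow_mul_rpow (pos hμ).1 (pos hμ).2 (pos hμ').1
    (pos hμ').2 hα₀ hα₁]
  ring_nf

theorem log_beta_eq_log_Gamma_add_one {a b : ℝ} (ha : 0 < a) (hb : 0 < b) :
    log (beta a b) =
      log (Gamma (a + 1)) + log (Gamma (b + 1)) - log a - log b - log (Gamma (a + b)) := by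
  rw [beta, Gamma_add_one ha.ne', Gamma_add_one hb.ne',
    log_div (mul_pos (Gamma_pos_of_pos ha) (Gamma_pos_of_pos hb)).ne'
      (Gamma_pos_of_pos (add_pos ha hb)).ne',
    log_mul (Gamma_pos_of_pos ha).ne' (Gamma_pos_of_pos hb).ne',
    log_mul ha.ne' (Gamma_pos_of_pos ha).ne', log_mul hb.ne' (Gamma_pos_of_pos hb).ne']
  ring

theorem ConvexOn.comp_mul_add {f : ℝ → ℝ} {s t : Set ℝ} (hf : ConvexOn ℝ t f)
    (hs : Convex ℝ s) {p q : ℝ} (hst : MapsTo (fun x => p * x + q) s t) :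
    ConvexOn ℝ s fun x => f (p * x + q) := by
  refine ⟨hs, fun x hx y hy a b ha hb hab => ?_⟩
  have h := hf.2 (hst hx) (hst hy) ha hb hab
  simp only [smul_eq_mul] at h ⊢
  convert h using 2
  linear_combination (-q) * hab

theorem strongConvexOn_neg_log : StrongConvexOn (Ioo (0:ℝ) 1) 1 fun x => -log x := by
  have hf' {x : ℝ} (hx : x ≠ 0) :
      HasDerivAt (fun x => -log x - 1 / 2 * x ^ 2) (-x⁻¹ - x) x :=
    ((hasDerivAt_log hx).fun_neg.fun_sub ((hasDerivAt_pow 2 x).const_mul (1 / 2))).congr_deriv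
      (by ring)
  have hf'' {x : ℝ} (hx : x ≠ 0) : HasDerivAt (fun x => -x⁻¹ - x) ((x ^ 2)⁻¹ - 1) x :=
    ((hasDerivAt_inv hx).fun_neg.fun_sub (hasDerivAt_id x)).congr_deriv (by ring)
  have hconv : ConvexOn ℝ (Ioo 0 1) fun x : ℝ => -log x - 1 / 2 * x ^ 2 := by
    refine convexOn_of_hasDerivWithinAt2_nonneg (convex_Ioo 0 1) (f' := fun x => -x⁻¹ - x)
      (f'' := fun x => (x ^ 2)⁻¹ - 1)
      (fun x hx => (hf' hx.1.ne').continuousAt.continuousWithinAt) ?_ ?_ ?_ <;>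
      intro x hx <;> rw [interior_Ioo] at hx
    · exact (hf' hx.1.ne').hasDerivWithinAt
    · exact (hf'' hx.1.ne').hasDerivWithinAt
    · have hx2 : x ^ 2 ≤ 1 := pow_le_one₀ hx.1.le hx.2.le
      exact sub_nonneg.2 ((one_le_inv₀ (pow_pos hx.1 2)).2 hx2)
  rw [strongConvexOn_iff_convex]
  simpa only [norm_eq_abs, sq_abs] using hconv

theorem strongConvexOn_log_beta_mean_precision {φ : ℝ} (hφ : 0 < φ) :
    StrongConvexOn (Ioo (0:ℝ) 1) 1 fun m => log (beta (m * φ) ((1 - m) * φ)) := by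
  have hΓ : ConvexOn ℝ (Ioi 0) fun x => log (Gamma x) := convexOn_log_Gamma
  have h₀ := strongConvexOn_iff_convex.1 strongConvexOn_neg_log
  have h₁ : ConvexOn ℝ (Ioo 0 1) fun m => log (Gamma (φ * m + 1)) :=
    hΓ.comp_mul_add (convex_Ioo 0 1) fun m hm => show 0 < φ * m + 1 by nlinarith [hm.1]
  have h₂ : ConvexOn ℝ (Ioo 0 1) fun m => log (Gamma (-φ * m + (φ + 1))) :=
    hΓ.comp_mul_add (convex_Ioo 0 1) fun m hm => show 0 < -φ * m + (φ + 1) by nlinarith [hm.2]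
  have h₃ : ConvexOn ℝ (Ioo 0 1) fun m => -log (-1 * m + 1) :=
    strictConcaveOn_log_Ioi.concaveOn.neg.comp_mul_add (convex_Ioo 0 1)
      fun m hm => show 0 < -1 * m + 1 by linarith [hm.2]
  rw [strongConvexOn_iff_convex]
  refine ((((h₀.add h₁).add h₂).add h₃).add_const (-(2 * log φ + log (Gamma φ)))).congr
    fun m hm => ?_
  have hmφ : 0 < m * φ := mul_pos hm.1 hφ
  have hmφ' : 0 < (1 - m) * φ := mul_pos (sub_pos.2 hm.2) hφ
  simp only [Pi.add_apply]
  rw [log_beta_eq_log_Gamma_add_one hmφ hmφ', log_mul hm.1.ne' hφ.ne',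
    log_mul (sub_pos.2 hm.2).ne' hφ.ne', show m * φ + (1 - m) * φ = φ by ring]
  ring_nf

theorem mul_sq_le_renyiBeta {α φ μ μ' : ℝ} (hφ : 0 < φ) (hα : α ∈ Ioo (0:ℝ) 1)
    (hμ : μ ∈ Ioo (0:ℝ) 1) (hμ' : μ' ∈ Ioo (0:ℝ) 1) :
    α / 2 * (μ - μ') ^ 2 ≤ renyiBeta α φ μ μ' := by
  have gap := (strongConvexOn_log_beta_mean_precision hφ).2 hμ hμ' hα.1.le
    (sub_nonneg.2 hα.2.le) (add_sub_cancel α 1)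
  simp only [smul_eq_mul, norm_eq_abs, sq_abs] at gap
  rw [renyiBeta_eq_log_beta hφ hμ hμ' hα.1.le hα.2.le, one_div_mul_eq_div,
    le_div_iff_of_neg (sub_neg.2 hα.2)]
  linear_combination gap

/-- For means in `[ε, 1-ε]`, the α-Rényi divergence between Beta distributions with fixed
precision `φ` is lower bounded by a constant times the squared distance of the means. -/
theorem renyiBeta_ge_sq (φ ε α : ℝ) (hφ : 0 < φ) (hε : ε ∈ Set.Ioo (0:ℝ) (1/2))
    (hα : α ∈ Set.Ioo (0:ℝ) 1) :
    ∃ c > 0, ∀ μ μ' : ℝ, μ ∈ Set.Icc ε (1 - ε) → μ' ∈ Set.Icc ε (1 - ε) →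
      c * (μ - μ') ^ 2 ≤ renyiBeta α φ μ μ' := by
  have mem_Ioo {μ : ℝ} (hμ : μ ∈ Icc ε (1 - ε)) : μ ∈ Ioo (0:ℝ) 1 :=
    ⟨hε.1.trans_le hμ.1, hμ.2.trans_lt (sub_lt_self 1 hε.1)⟩
  exact ⟨α / 2, half_pos hα.1, fun μ μ' hμ hμ' =>
    mul_sq_le_renyiBeta hφ hα (mem_Ioo hμ) (mem_Ioo hμ')⟩
end

section
/- Let b ∈ ℝ and c > 0. Then for all ψ ∈ ℝ, (e^ψ)^a / (1 + e^ψ)^b = 2^{−b} e^{κψ} ∫_0^∞ e^{−ωψ²/2} p(ω) dω, where κ = a − b/2 and p is the density of the Pólya–Gamma distribution PG(b, 0). In particular, the function ψ ↦ (cosh(ψ/2))^{−b} is the Laplace transform (in ψ²/2) of a PG(b,0) random variable. -/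
open MeasureTheory ProbabilityTheory Real Filter Topology

/-!
Write `W ψ² / 2 = Σ c_k g_k` with `c_k = ψ² / (π² (2k+1)²)`. The Laplace transform of
`Gamma(b, 1)` is `(1 + t)^(-b)`, so by independence
`E[exp(-Σ_{k<n} c_k g_k)] = ∏_{k<n} (1 + c_k)^(-b)`. Since `E g_k = b` and `Σ c_k < ∞`, the series
converges almost surely, and dominated convergence (the integrands lie in `[0, 1]`) gives
`E[exp(-W ψ² / 2)] = ∏_k (1 + c_k)^(-b) = cosh(ψ/2)^(-b)` by Euler's product for `cosh`, itself
the quotient of the sine products at `2x` and `x` through `sinh 2x = 2 sinh x cosh x`.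
It remains to note `1 + e^ψ = 2 e^(ψ/2) cosh(ψ/2)`.
-/

lemma ae_summable_of_tsum_lintegral_ne_top {Ω ι : Type*} [MeasurableSpace Ω] [Countable ι]
    {μ : Measure Ω} {X : ι → Ω → ℝ} (hX : ∀ i, AEMeasurable (X i) μ) (hnn : ∀ i, 0 ≤ᵐ[μ] X i)
    (h : ∑' i, ∫⁻ ω, ENNReal.ofReal (X i ω) ∂μ ≠ ⊤) :
    ∀ᵐ ω ∂μ, Summable fun i => X i ω := by
  rw [← lintegral_tsum fun i => (hX i).ennreal_ofReal] at h
  filter_upwards [ae_lt_top' (AEMeasurable.tsum fun i => (hX i).ennreal_ofReal) h,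
    ae_all_iff.mpr hnn] with ω hfin hω
  exact (ENNReal.summable_toReal hfin.ne).congr fun i => ENNReal.toReal_ofReal (hω i)

namespace ProbabilityTheory

variable {a r : ℝ}

lemma measurable_gammaPDF (a r : ℝ) : Measurable (gammaPDF a r) :=
  (measurable_gammaPDFReal a r).ennreal_ofReal

lemma gammaPDF_mul_ofReal_exp (hr : 0 < r) {t : ℝ} (ht : t < r) (x : ℝ) :
    gammaPDF a r x * ENNReal.ofReal (exp (t * x))
      = ENNReal.ofReal ((r / (r - t)) ^ a) * gammaPDF a (r - t) x := by
  rcases lt_or_ge x 0 with hx | hx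
  · simp [gammaPDF_of_neg hx]
  have hrt : 0 < r - t := sub_pos.mpr ht
  rw [gammaPDF_of_nonneg hx, gammaPDF_of_nonneg hx, ← ENNReal.ofReal_mul' (exp_pos _).le,
    ← ENNReal.ofReal_mul (by positivity), div_rpow hr.le hrt.le]
  congr 1
  rw [show exp (-((r - t) * x)) = exp (-(r * x)) * exp (t * x) by rw [← exp_add]; ring_nf]
  field_simp

lemma gammaPDF_mul_ofReal (ha : 0 < a) (hr : 0 < r) (x : ℝ) :
    gammaPDF a r x * ENNReal.ofReal x = ENNReal.ofReal (a / r) * gammaPDF (a + 1) r x := by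
  rcases lt_or_ge x 0 with hx | hx
  · simp [gammaPDF_of_neg hx]
  rw [gammaPDF_of_nonneg hx, gammaPDF_of_nonneg hx, ← ENNReal.ofReal_mul' hx,
    ← ENNReal.ofReal_mul (by positivity), Gamma_add_one ha.ne', add_sub_cancel_right,
    rpow_add_one hr.ne']
  congr 1
  rcases hx.eq_or_lt with rfl | hx
  · simp [zero_rpow ha.ne']
  rw [rpow_sub_one hx.ne']
  field_simp

lemma lintegral_ofReal_exp_mul_gammaMeasure (ha : 0 < a) (hr : 0 < r) {t : ℝ} (ht : t < r) :
    ∫⁻ x, ENNReal.ofReal (exp (t * x)) ∂gammaMeasure a r = ENNReal.ofReal ((r / (r - t)) ^ a) := by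
  rw [gammaMeasure, lintegral_withDensity_eq_lintegral_mul _ (measurable_gammaPDF a r)
    (by fun_prop)]
  simp only [Pi.mul_apply, gammaPDF_mul_ofReal_exp hr ht]
  rw [lintegral_const_mul _ (measurable_gammaPDF a (r - t)),
    lintegral_gammaPDF_eq_one ha (sub_pos.mpr ht), mul_one]

lemma mgf_id_gammaMeasure (ha : 0 < a) (hr : 0 < r) {t : ℝ} (ht : t < r) :
    mgf id (gammaMeasure a r) t = (r / (r - t)) ^ a := by
  rw [mgf, integral_eq_lintegral_of_nonneg_ae (ae_of_all _ fun x => (exp_pos _).le)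
    (by fun_prop)]
  simp only [id, lintegral_ofReal_exp_mul_gammaMeasure ha hr ht]
  exact ENNReal.toReal_ofReal (by have := sub_pos.mpr ht; positivity)

lemma lintegral_ofReal_gammaMeasure (ha : 0 < a) (hr : 0 < r) :
    ∫⁻ x, ENNReal.ofReal x ∂gammaMeasure a r = ENNReal.ofReal (a / r) := by
  rw [gammaMeasure, lintegral_withDensity_eq_lintegral_mul _ (measurable_gammaPDF a r)
    (by fun_prop)]
  simp only [Pi.mul_apply, gammaPDF_mul_ofReal ha hr]
  rw [lintegral_const_mul _ (measurable_gammaPDF (a + 1) r),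
    lintegral_gammaPDF_eq_one (by linarith) hr, mul_one]

lemma ae_nonneg_gammaMeasure : ∀ᵐ x ∂gammaMeasure a r, 0 ≤ x := by
  have : gammaMeasure a r (Set.Iio 0) = 0 := by
    rw [gammaMeasure, withDensity_apply _ measurableSet_Iio,
      setLIntegral_congr_fun measurableSet_Iio fun x hx => gammaPDF_of_neg hx, lintegral_zero]
  filter_upwards [measure_eq_zero_iff_ae_notMem.mp this] with x hx
  simpa using hx

section GammaSeries

variable {Ω : Type*} [MeasureSpace Ω] {b : ℝ}

lemma integral_exp_neg_sum_mul_gamma {ι : Type*} {g : ι → Ω → ℝ} (hb : 0 < b)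
    (hmeas : ∀ i, Measurable (g i)) (hiid : iIndepFun g ℙ)
    (hdist : ∀ i, Measure.map (g i) ℙ = gammaMeasure b 1) {c : ι → ℝ} (hc : ∀ i, -1 < c i)
    (s : Finset ι) :
    ∫ ω, exp (-∑ i ∈ s, c i * g i ω) ∂ℙ = ∏ i ∈ s, (1 + c i) ^ (-b) := by
  calc ∫ ω, exp (-∑ i ∈ s, c i * g i ω) ∂ℙ
      = mgf (∑ i ∈ s, fun ω => c i * g i ω) ℙ (-1) := by simp [mgf, Finset.sum_apply]
    _ = ∏ i ∈ s, mgf (fun ω => c i * g i ω) ℙ (-1) :=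
        (hiid.comp (fun i x => c i * x) fun i => measurable_const_mul _).mgf_sum
          (fun i => (hmeas i).const_mul _) s
    _ = ∏ i ∈ s, (1 + c i) ^ (-b) := by
        refine Finset.prod_congr rfl fun i _ => ?_
        have hci : 0 < 1 + c i := by linarith [hc i]
        rw [mgf_const_mul, ← mgf_id_map (hmeas i).aemeasurable, hdist,
          mgf_id_gammaMeasure hb one_pos (by linarith [hc i]), mul_neg_one, sub_neg_eq_add,
          one_div, inv_rpow hci.le, rpow_neg hci.le]

variable {g : ℕ → Ω → ℝ}

lemma ae_nonneg_of_map_eq_gammaMeasure (hmeas : ∀ k, Measurable (g k))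
    (hdist : ∀ k, Measure.map (g k) ℙ = gammaMeasure b 1) : ∀ᵐ ω ∂ℙ, ∀ k, 0 ≤ g k ω :=
  ae_all_iff.mpr fun k =>
    ae_of_ae_map (hmeas k).aemeasurable ((hdist k).symm ▸ ae_nonneg_gammaMeasure)

lemma ae_summable_mul_gamma (hb : 0 < b) (hmeas : ∀ k, Measurable (g k))
    (hdist : ∀ k, Measure.map (g k) ℙ = gammaMeasure b 1) {c : ℕ → ℝ} (hc : ∀ k, 0 ≤ c k)
    (hcs : Summable c) : ∀ᵐ ω ∂ℙ, Summable fun k => c k * g k ω := by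
  have hmean : ∀ k, ∫⁻ ω, ENNReal.ofReal (c k * g k ω) ∂ℙ
      = ENNReal.ofReal (c k) * ENNReal.ofReal b := by
    intro k
    simp_rw [ENNReal.ofReal_mul (hc k)]
    rw [lintegral_const_mul _ (hmeas k).ennreal_ofReal,
      ← lintegral_map ENNReal.measurable_ofReal (hmeas k), hdist,
      lintegral_ofReal_gammaMeasure hb one_pos, div_one]
  have hnn := ae_nonneg_of_map_eq_gammaMeasure hmeas hdist
  refine ae_summable_of_tsum_lintegral_ne_top (fun k => ((hmeas k).const_mul _).aemeasurable)
    (fun k => ?_) ?_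
  · filter_upwards [hnn] with ω hω using mul_nonneg (hc k) (hω k)
  · simp_rw [hmean]
    rw [ENNReal.tsum_mul_right, ← ENNReal.ofReal_tsum_of_nonneg hc hcs]
    exact ENNReal.mul_ne_top ENNReal.ofReal_ne_top ENNReal.ofReal_ne_top

lemma tendsto_prod_one_add_rpow_neg_integral_exp_neg_tsum_mul_gamma (hb : 0 < b)
    (hmeas : ∀ k, Measurable (g k)) (hiid : iIndepFun g ℙ)
    (hdist : ∀ k, Measure.map (g k) ℙ = gammaMeasure b 1) {c : ℕ → ℝ} (hc : ∀ k, 0 ≤ c k)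
    (hcs : Summable c) :
    Tendsto (fun n => ∏ k ∈ Finset.range n, (1 + c k) ^ (-b)) atTop
      (𝓝 (∫ ω, exp (-∑' k, c k * g k ω) ∂ℙ)) := by
  have := hiid.isProbabilityMeasure
  have hc' : ∀ k, -1 < c k := fun k => by linarith [hc k]
  simp_rw [← integral_exp_neg_sum_mul_gamma hb hmeas hiid hdist hc']
  refine tendsto_integral_of_dominated_convergence (fun _ => 1)
    (fun n => by fun_prop) (integrable_const _) (fun n => ?_) ?_
  · filter_upwards [ae_nonneg_of_map_eq_gammaMeasure hmeas hdist] with ω hω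
    rw [norm_of_nonneg (exp_pos _).le, exp_le_one_iff, neg_nonpos]
    exact Finset.sum_nonneg fun k _ => mul_nonneg (hc k) (hω k)
  · filter_upwards [ae_summable_mul_gamma hb hmeas hdist hc hcs] with ω hω
    exact (continuous_exp.tendsto _).comp hω.hasSum.tendsto_sum_nat.neg

end GammaSeries

end ProbabilityTheory

lemma Finset.prod_range_two_mul {M : Type*} [CommMonoid M] (f : ℕ → M) (n : ℕ) :
    ∏ j ∈ range (2 * n), f j = (∏ k ∈ range n, f (2 * k)) * ∏ k ∈ range n, f (2 * k + 1) := by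
  induction n with
  | zero => simp
  | succ n ih =>
    rw [Nat.mul_succ, prod_range_succ, prod_range_succ, ih, prod_range_succ, prod_range_succ]
    ac_rfl

namespace Real

theorem tendsto_euler_sinh_prod (x : ℝ) :
    Tendsto (fun n : ℕ => π * x * ∏ j ∈ Finset.range n, (1 + x ^ 2 / ((j : ℝ) + 1) ^ 2)) atTop
      (𝓝 (sinh (π * x))) := by
  have h := (Complex.tendsto_euler_sin_prod (x * Complex.I)).mul_const (-Complex.I)
  rw [← mul_assoc, Complex.sin_mul_I] at h
  rw [← tendsto_ofReal_iff]
  convert h using 2 with n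
  · simp only [mul_pow, Complex.I_sq, mul_neg_one, neg_div, sub_neg_eq_add]
    push_cast
    ring_nf
    rw [Complex.I_sq]
    ring
  · rw [mul_assoc, mul_neg, Complex.I_mul_I, neg_neg, mul_one, Complex.ofReal_sinh]
    push_cast
    rfl

theorem tendsto_euler_cosh_prod (x : ℝ) :
    Tendsto (fun n : ℕ => ∏ k ∈ Finset.range n, (1 + (2 * x) ^ 2 / (2 * (k : ℝ) + 1) ^ 2))
      atTop (𝓝 (cosh (π * x))) := by
  rcases eq_or_ne x 0 with rfl | hx
  · simp
  have hsinh : sinh (π * x) ≠ 0 := by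
    simpa [sinh_eq_zero] using mul_ne_zero pi_ne_zero hx
  have h := (((tendsto_euler_sinh_prod (2 * x)).comp
    (tendsto_id.const_mul_atTop' two_pos)).div (tendsto_euler_sinh_prod x) hsinh).div_const 2
  have hlim : sinh (π * (2 * x)) / sinh (π * x) / 2 = cosh (π * x) := by
    rw [mul_left_comm, sinh_two_mul]
    field_simp
  refine hlim ▸ h.congr fun n => ?_
  simp only [Function.comp_apply, Pi.div_apply, id, Finset.prod_range_two_mul]
  have hodd : ∏ k ∈ Finset.range n, (1 + (2 * x) ^ 2 / (((2 * k + 1 : ℕ) : ℝ) + 1) ^ 2)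
      = ∏ k ∈ Finset.range n, (1 + x ^ 2 / ((k : ℝ) + 1) ^ 2) := by
    refine Finset.prod_congr rfl fun k _ => ?_
    push_cast
    field_simp
    ring
  have hpos : 0 < ∏ k ∈ Finset.range n, (1 + x ^ 2 / ((k : ℝ) + 1) ^ 2) :=
    Finset.prod_pos fun k _ => by positivity
  rw [hodd]
  push_cast
  field_simp

end Real

lemma summable_div_two_mul_add_one_sq (C : ℝ) :
    Summable fun k : ℕ => C / (2 * (k : ℝ) + 1) ^ 2 := by
  refine (((summable_one_div_nat_add_rpow (1 / 2) 2).mpr one_lt_two).mul_left (C / 4)).congr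
    fun k => ?_
  rw [abs_of_pos (by positivity), rpow_two]
  field_simp
  ring

lemma exp_rpow_div_one_add_exp_rpow (a b ψ : ℝ) :
    exp ψ ^ a / (1 + exp ψ) ^ b = 2 ^ (-b) * exp ((a - b / 2) * ψ) * cosh (ψ / 2) ^ (-b) := by
  have hsum : 1 + exp ψ = 2 * exp (ψ / 2) * cosh (ψ / 2) := by
    have hsq : exp (ψ / 2) * exp (ψ / 2) = exp ψ := by rw [← exp_add, add_halves]
    have hinv : exp (ψ / 2) * exp (-(ψ / 2)) = 1 := by rw [← exp_add, add_neg_cancel, exp_zero]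
    rw [cosh_eq]
    linear_combination -hsq - hinv
  have hcosh := cosh_pos (ψ / 2)
  rw [hsum, mul_rpow (by positivity) hcosh.le, mul_rpow zero_le_two (exp_pos _).le,
    ← exp_mul, ← exp_mul, rpow_neg zero_le_two, rpow_neg hcosh.le,
    show (a - b / 2) * ψ = ψ * a - ψ / 2 * b by ring, exp_sub]
  field_simp

theorem polya_gamma_identity_general
    {Ω : Type*} [MeasureSpace Ω]
    (b : ℝ) (hb : 0 < b) (g : ℕ → Ω → ℝ)
    (hmeas : ∀ k, Measurable (g k))
    (hiid : iIndepFun g ℙ)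
    (hdist : ∀ k, Measure.map (g k) ℙ = gammaMeasure b 1)
    (W : Ω → ℝ)
    (hW : ∀ x, W x = (1 / (2 * Real.pi ^ 2)) *
      ∑' k : ℕ, g k x / (((k : ℝ) + 1) - 1/2) ^ 2)
    (a ψ : ℝ) :
    (Real.exp ψ) ^ a / (1 + Real.exp ψ) ^ b
      = 2 ^ (-b) * Real.exp ((a - b / 2) * ψ) *
          ∫ x, Real.exp (-(W x) * ψ ^ 2 / 2) ∂ℙ := by
  set c : ℕ → ℝ := fun k => (2 * (ψ / (2 * π))) ^ 2 / (2 * (k : ℝ) + 1) ^ 2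
  have hWc : ∀ x, W x * ψ ^ 2 / 2 = ∑' k, c k * g k x := fun x => by
    rw [hW x, ← tsum_mul_left, ← tsum_mul_right, ← tsum_div_const]
    refine tsum_congr fun k => ?_
    rw [show (k : ℝ) + 1 - 1 / 2 = (2 * k + 1) / 2 by ring]
    simp only [c]
    field_simp
  have hprod := tendsto_prod_one_add_rpow_neg_integral_exp_neg_tsum_mul_gamma hb hmeas hiid
    hdist (c := c) (fun k => by positivity) (summable_div_two_mul_add_one_sq _)
  have hcosh : Tendsto (fun n => ∏ k ∈ Finset.range n, (1 + c k) ^ (-b)) atTop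
      (𝓝 (cosh (ψ / 2) ^ (-b))) := by
    have h := (continuousAt_rpow_const _ (-b) (Or.inl (cosh_pos _).ne')).tendsto.comp
      (tendsto_euler_cosh_prod (ψ / (2 * π)))
    rw [show π * (ψ / (2 * π)) = ψ / 2 by field_simp] at h
    exact h.congr fun n => (finsetProd_rpow _ _ (fun k _ => by positivity) _).symm
  have hlaplace : ∫ x, exp (-(W x) * ψ ^ 2 / 2) ∂ℙ = cosh (ψ / 2) ^ (-b) := by
    simp_rw [neg_mul, neg_div, hWc]
    exact tendsto_nhds_unique hprod hcosh
  rw [exp_rpow_div_one_add_exp_rpow, hlaplace]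

/-- Pólya–Gamma augmentation identity (Polson, Scott & Windle). Let `g k`, `k ∈ ℕ`, be
i.i.d. `Gamma(b,1)` random variables and let
`W = (1/(2π²)) Σ_{k≥1} g_k/((k-1/2)²)` be a `PG(b,0)` random variable. Then for all
`a ∈ ℝ` and all `ψ ∈ ℝ`,
`(e^ψ)^a / (1+e^ψ)^b = 2^{-b} e^{κψ} E[exp(-W ψ²/2)]` with `κ = a - b/2`. -/
theorem polya_gamma_identity
    {Ω : Type*} [MeasureSpace Ω] [IsProbabilityMeasure (ℙ : Measure Ω)]
    (b : ℝ) (hb : 0 < b) (g : ℕ → Ω → ℝ)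
    (hmeas : ∀ k, Measurable (g k))
    (hiid : iIndepFun g ℙ)
    (hdist : ∀ k, Measure.map (g k) ℙ = gammaMeasure b 1)
    (W : Ω → ℝ)
    (hW : ∀ x, W x = (1 / (2 * Real.pi ^ 2)) *
      ∑' k : ℕ, g k x / (((k : ℝ) + 1) - 1/2) ^ 2)
    (a ψ : ℝ) :
    (Real.exp ψ) ^ a / (1 + Real.exp ψ) ^ b
      = 2 ^ (-b) * Real.exp ((a - b / 2) * ψ) *
          ∫ x, Real.exp (-(W x) * ψ ^ 2 / 2) ∂ℙ :=
  polya_gamma_identity_general b hb g hmeas hiid hdist W hW a ψ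
end

section
/- A half-Cauchy random variable admits the scale-mixture representation: if λ² | ν ∼ Inv-Gamma(1/2, 1/ν) and ν ∼ Inv-Gamma(1/2, 1), then the marginal distribution of λ = √(λ²) is the standard half-Cauchy distribution Cau₊(0,1), i.e., has density 2/(π(1+λ²)) on (0,∞). -/
/-!
For fixed `ν > 0` the product of the densities `Inv-Gamma(x; a, 1/ν)` and `Inv-Gamma(ν; a', b)`
is, as a function of `ν`, a multiple of the unnormalised inverse-gamma density
`ν ^ (-(a + a') - 1) * exp (-(1/x + b) / ν)`, so integrating out `ν` only produces its
normalising constant `Γ(a + a') / (1/x + b) ^ (a + a')`. For `a = a' = 1/2`, `b = 1`, `x = λ²`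
this gives `1 / (π λ (1 + λ²))`, and the Jacobian `2λ` turns it into the half-Cauchy density.
-/

open Real MeasureTheory

/-- Density of the inverse-gamma distribution `Inv-Gamma(a,b)` on `(0,∞)`. -/
noncomputable def invGammaPdf (a b x : ℝ) : ℝ :=
  (b ^ a / Real.Gamma a) * x ^ (-a - 1) * Real.exp (-b / x)

open Set

-- The substitution `y = 1 / x` turns this into Euler's integral for `Γ a`.
theorem integral_rpow_neg_sub_one_mul_exp_neg_div_Ioi {a b : ℝ} (ha : 0 < a) (hb : 0 < b) :
    ∫ x in Ioi (0 : ℝ), x ^ (-a - 1) * exp (-b / x) = Gamma a / b ^ a := by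
  have hsub := integral_comp_rpow_Ioi (fun y : ℝ => y ^ (a - 1) * exp (-(b * y))) (p := -1)
    (by norm_num)
  rw [integral_rpow_mul_exp_neg_mul_Ioi ha hb, one_div, inv_rpow hb.le, inv_mul_eq_div] at hsub
  rw [← hsub]
  refine setIntegral_congr_fun measurableSet_Ioi fun x (hx : 0 < x) => ?_
  rw [smul_eq_mul, ← rpow_mul hx.le, abs_neg, abs_one, one_mul, ← mul_assoc, ← rpow_add hx,
    rpow_neg_one]
  ring_nf

theorem invGammaPdf_mul_invGammaPdf {a a' b x ν : ℝ} (hν : 0 < ν) :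
    invGammaPdf a (1 / ν) x * invGammaPdf a' b ν
      = b ^ a' / (Gamma a * Gamma a') * x ^ (-a - 1)
        * (ν ^ (-(a + a') - 1) * exp (-(1 / x + b) / ν)) := by
  have hpow : (1 / ν) ^ a * ν ^ (-a' - 1) = ν ^ (-(a + a') - 1) := by
    rw [one_div, inv_rpow hν.le, ← rpow_neg hν.le, ← rpow_add hν]
    ring_nf
  have hexp : exp (-(1 / ν) / x) * exp (-b / ν) = exp (-(1 / x + b) / ν) := by
    rw [← exp_add]
    ring_nf
  unfold invGammaPdf
  rw [← hpow, ← hexp]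
  ring

theorem integral_invGammaPdf_mul_invGammaPdf {a a' b x : ℝ} (ha : 0 < a) (ha' : 0 < a')
    (hb : 0 < b) (hx : 0 < x) :
    ∫ ν in Ioi (0 : ℝ), invGammaPdf a (1 / ν) x * invGammaPdf a' b ν
      = b ^ a' * Gamma (a + a') / (Gamma a * Gamma a') * x ^ (-a - 1)
        / (1 / x + b) ^ (a + a') := by
  rw [setIntegral_congr_fun measurableSet_Ioi fun ν (hν : 0 < ν) => invGammaPdf_mul_invGammaPdf hν,
    integral_const_mul, integral_rpow_neg_sub_one_mul_exp_neg_div_Ioi (by positivity)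
      (by positivity)]
  ring

/-- Scale-mixture representation of the half-Cauchy distribution: if
`λ² | ν ~ Inv-Gamma(1/2, 1/ν)` and `ν ~ Inv-Gamma(1/2, 1)`, then `λ` is standard
half-Cauchy, i.e. the marginal density of `λ` (including the Jacobian `2λ` from the
change of variables `λ² ↦ λ`) equals `2/(π(1+λ²))` on `(0,∞)`. -/
theorem halfCauchy_scale_mixture (l : ℝ) (hl : 0 < l) :
    2 * l * ∫ ν in Set.Ioi (0:ℝ),
        invGammaPdf (1/2) (1/ν) (l ^ 2) * invGammaPdf (1/2) 1 ν
      = 2 / (Real.pi * (1 + l ^ 2)) := by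
  have hl3 : (l ^ 2) ^ (-(1 / 2) - 1 : ℝ) = (l ^ 3)⁻¹ := by
    rw [← rpow_natCast, ← rpow_mul hl.le, ← rpow_natCast, ← rpow_neg hl.le]
    norm_num
  rw [integral_invGammaPdf_mul_invGammaPdf (by norm_num) (by norm_num) one_pos (by positivity),
    add_halves, rpow_one, one_rpow, Gamma_one, Gamma_one_half_eq, mul_self_sqrt pi_pos.le, hl3]
  field_simp
end
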